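/- arXiv:1807.06411 — 6 statements merged into one kernel-verified Lean document; each statement's English description precedes it below -/
import Mathlib

section
/- Let (A,+,∘) be a skew left brace. Then the map r: A × A → A × A defined by r(a,b) = (-a + a∘b, (-a + a∘b)' ∘ a ∘ b), where x' denotes the inverse of x in (A,∘), satisfies the braid relation r₁₂ ∘ r₂₃ ∘ r₁₂ = r₂₃ ∘ r₁₂ ∘ r₂₃ on A × A × A. -/
/-- A skew left brace: `(A,+)` and `(A,∘)` are (not necessarily abelian) groups,
where `∘` is written `*`, satisfying `a∘(b+c) = a∘b - a + a∘c`. -/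
class SkewBrace (A : Type*) extends AddGroup A, Group A where
  circ_add : ∀ a b c : A, a * (b + c) = a * b + -a + a * c

variable {A : Type*} [SkewBrace A]

/-- The map `r(a,b) = (-a + a∘b, (-a + a∘b)ʼ ∘ a ∘ b)` associated to a skew left brace. -/
def braceR : A × A → A × A := fun p =>
  (-p.1 + p.1 * p.2, (-p.1 + p.1 * p.2)⁻¹ * p.1 * p.2)

/-- `r₁₂ = r × id` on `A × A × A`. -/
def braceR12 : A × A × A → A × A × A := fun p =>
  ((braceR (p.1, p.2.1)).1, (braceR (p.1, p.2.1)).2, p.2.2)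

/-- `r₂₃ = id × r` on `A × A × A`. -/
def braceR23 : A × A × A → A × A × A := fun p => (p.1, braceR (p.2.1, p.2.2))

def lam (a b : A) : A := -a + a * b

theorem lam_def (a b : A) : lam a b = -a + a * b := rfl

theorem sb_mul_zero (a : A) : a * (0 : A) = a := by
  have h := SkewBrace.circ_add a 0 0
  rw [add_zero] at h
  have h2 : a * 0 + 0 = a * 0 + (-a + a * 0) := by
    rw [add_zero, ← add_assoc]; exact h
  have h3 := add_left_cancel h2
  have h4 : a * 0 = a + (-a + a * 0) := by
    rw [← add_assoc, add_neg_cancel, zero_add]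
  rw [h4, ← h3, add_zero]

theorem one_eq_zero : (1 : A) = 0 := by
  have := sb_mul_zero (1 : A)
  rw [one_mul] at this
  exact this.symm

theorem lam_add (a b c : A) : lam a (b + c) = lam a b + lam a c := by
  simp only [lam_def, SkewBrace.circ_add]
  simp [add_assoc]

theorem lam_zero (a : A) : lam a 0 = 0 := by
  simp [lam_def, sb_mul_zero]

theorem lam_neg (a b : A) : lam a (-b) = -(lam a b) := by
  have h := lam_add a b (-b)
  rw [add_neg_cancel, lam_zero] at h
  exact (neg_eq_of_add_eq_zero_right h.symm).symm

theorem mul_eq (a b : A) : a * b = a + lam a b := by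
  rw [lam_def, ← add_assoc, add_neg_cancel, zero_add]

theorem lam_lam (a b c : A) : lam a (lam b c) = lam (a * b) c := by
  rw [show lam b c = -b + b * c from rfl, lam_add, lam_neg,
    show lam (a * b) c = -(a * b) + a * b * c from rfl,
    mul_assoc, mul_eq a (b * c), mul_eq a b, neg_add_rev]
  simp [add_assoc]

theorem inv_eq (a : A) : (a⁻¹ : A) = -(lam a⁻¹ a) := by
  have h : a⁻¹ * a = (0 : A) := by rw [inv_mul_cancel, one_eq_zero]
  rw [mul_eq] at h
  exact neg_eq_of_add_eq_zero_left h |>.symm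

theorem rho_eq (a b : A) :
    (lam a b)⁻¹ * a * b = lam (lam a b)⁻¹ (-(lam a b) + a + lam a b) := by
  rw [mul_assoc, mul_eq a b, mul_eq (lam a b)⁻¹]
  simp only [lam_add, lam_neg]
  nth_rewrite 1 [inv_eq (lam a b)]
  simp [add_assoc]

/-- The map `r` associated to a skew left brace satisfies the braid relation. -/
theorem skewBrace_braid (A : Type*) [SkewBrace A] :
    (braceR12 ∘ braceR23 ∘ braceR12 : A × A × A → A × A × A) =
      braceR23 ∘ braceR12 ∘ braceR23 := by
  funext p
  obtain ⟨a, b, c⟩ := p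
  simp only [Function.comp_apply, braceR12, braceR23, braceR, Prod.mk.injEq]
  simp only [← lam_def]
  have hs : lam (lam a b) (lam ((lam a b)⁻¹ * a * b) c) = lam a (lam b c) := by
    rw [lam_lam, lam_lam]
    congr 1
    group
  have h2 : (lam (lam a b) (lam ((lam a b)⁻¹ * a * b) c))⁻¹ * lam a b *
        lam ((lam a b)⁻¹ * a * b) c =
      lam ((lam a (lam b c))⁻¹ * a * lam b c) ((lam b c)⁻¹ * b * c) := by
    rw [rho_eq (lam a b) (lam ((lam a b)⁻¹ * a * b) c), hs, rho_eq b c,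
      lam_lam ((lam a (lam b c))⁻¹ * a * lam b c) (lam b c)⁻¹
        (-(lam b c) + b + lam b c)]
    have hv : ((lam a (lam b c))⁻¹ * a * lam b c) * (lam b c)⁻¹ =
        (lam a (lam b c))⁻¹ * a := by group
    rw [hv, ← lam_lam (lam a (lam b c))⁻¹ a (-(lam b c) + b + lam b c)]
    simp only [lam_add, lam_neg]
  refine ⟨hs, h2, ?_⟩
  rw [← h2, hs]
  group
end

section
/- Let (A,+,∘) be a skew left brace and let r(a,b) = (-a + a∘b, (-a + a∘b)' ∘ a ∘ b). Then r is involutive (r² = id) if and only if the additive group (A,+) is abelian. -/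
variable {A : Type*} [SkewBrace A]

/-- `r` is involutive iff the additive group of the skew left brace is abelian. -/
theorem skewBrace_involutive_iff_abelian (A : Type*) [SkewBrace A] :
    (braceR ∘ braceR : A × A → A × A) = id ↔ ∀ a b : A, a + b = b + a := by
  constructor
  · intro h a b
    have h2 := congrArg Prod.fst (congrFun h (a, a⁻¹ * b))
    simp only [Function.comp_apply, braceR, id_eq, mul_inv_cancel_left] at h2
    -- h2 should say : -(-a + b) + ((-a + b) * ((-a + b)⁻¹ * a * (a⁻¹ * b))) = a
    have hb : (-a + b) * ((-a + b)⁻¹ * a * (a⁻¹ * b)) = b := by group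
    rw [hb, neg_add_rev, neg_neg] at h2
    -- h2 : -b + a + b = a
    have := congrArg (b + ·) h2
    simpa [← add_assoc] using this
  · intro h
    funext p
    obtain ⟨a, b⟩ := p
    have key : -(-a + a * b) + (-a + a * b) * ((-a + a * b)⁻¹ * a * b) = a := by
      have : (-a + a * b) * ((-a + a * b)⁻¹ * a * b) = a * b := by group
      rw [this, neg_add_rev, neg_neg, add_assoc, h a (a * b), ← add_assoc]
      simp
    simp only [Function.comp_apply, braceR, id_eq, key, Prod.mk.injEq]
    constructor
    · trivial
    · group
end

section
/- Every finite cycle set is non-degenerate: if (X,·) is a finite cycle set, then the map x ↦ x·x is a bijection of X. -/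
/-- Every finite cycle set is non-degenerate: the square map `x ↦ x·x` is bijective. -/
theorem finite_cycleSet_nondegenerate (X : Type*) [Finite X] [Nonempty X]
    (op : X → X → X) (hbij : ∀ x : X, Function.Bijective (op x))
    (hcyc : ∀ x y z : X, op (op x y) (op x z) = op (op y x) (op y z)) :
    Function.Bijective (fun x : X => op x x) := by
  set q : X → X := fun x => op x x with hq
  rw [← Finite.surjective_iff_bijective]
  -- key stability: the range of q is stable under every left multiplication
  have hmaps : ∀ z : X, Set.MapsTo (op z) (Set.range q) (Set.range q) := by
    rintro z c ⟨y, rfl⟩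
    obtain ⟨x, hx⟩ := (hbij y).2 z
    exact ⟨op x y, by simp only [hq]; rw [hcyc x y y, hx]⟩
  have hsurjOn : ∀ z : X, Set.SurjOn (op z) (Set.range q) (Set.range q) := by
    intro z
    have hinj : Set.InjOn (op z) (Set.range q) := (hbij z).1.injOn
    exact ((Set.Finite.injOn_iff_bijOn_of_mapsTo (Set.toFinite _)
      (hmaps z)).mp hinj).surjOn
  intro t
  -- every element lies in the range of q
  have hz : (fun x => op t x) t ∈ Set.range q := ⟨t, rfl⟩
  obtain ⟨c, hc, hct⟩ := hsurjOn t hz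
  have : c = t := (hbij t).1 hct
  exact this ▸ hc
end

section
/- Let (X,·) be a non-degenerate cycle set and define x*y = z iff x·z = y. Then the map r: X × X → X × X given by r(x,y) = ((y*x)·y, y*x) is an involutive solution to the Yang–Baxter equation, i.e., r² = id and r₁₂ ∘ r₂₃ ∘ r₁₂ = r₂₃ ∘ r₁₂ ∘ r₂₃. -/
/-- For a non-degenerate cycle set `(X,·)` with `x*y = φ_x⁻¹(y)`, the map
`r(x,y) = ((y*x)·y, y*x)` is an involutive solution to the Yang–Baxter equation. -/
theorem cycleSet_to_involutive_solution (X : Type*) [Nonempty X]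
    (op : X → X → X) (hbij : ∀ x : X, Function.Bijective (op x))
    (hcyc : ∀ x y z : X, op (op x y) (op x z) = op (op y x) (op y z))
    (hnd : Function.Bijective (fun x : X => op x x))
    (star : X → X → X) (hstar : ∀ x y : X, op x (star x y) = y)
    (r : X × X → X × X)
    (hr : ∀ x y : X, r (x, y) = (op (star y x) y, star y x))
    (r12 r23 : X × X × X → X × X × X)
    (hr12 : ∀ p : X × X × X, r12 p = ((r (p.1, p.2.1)).1, (r (p.1, p.2.1)).2, p.2.2))
    (hr23 : ∀ p : X × X × X, r23 p = (p.1, r (p.2.1, p.2.2))) :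
    (r ∘ r = id) ∧ r12 ∘ r23 ∘ r12 = r23 ∘ r12 ∘ r23 := by
  have hinv : ∀ a b : X, star a (op a b) = b := fun a b => (hbij a).1 (hstar a (op a b))
  have hinv' : ∀ a b c : X, star (op a b) (op (op b a) (op b c)) = op a c := by
    intro a b c; rw [hcyc b a c]; exact hinv _ _
  constructor
  · funext p
    obtain ⟨x, y⟩ := p
    simp only [Function.comp_apply, hr, hinv, hstar, id_eq]
  · funext p
    obtain ⟨x, y, z⟩ := p
    obtain ⟨y, rfl⟩ := (hbij z).2 y
    obtain ⟨x, rfl⟩ := (hbij (op z y)).2 x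
    obtain ⟨x, rfl⟩ := (hbij z).2 x
    simp only [Function.comp_apply, hr12, hr23, hr, hinv, hinv']
    rw [hcyc x y z]
end

section
/- A two-sided skew brace of abelian type is equivalent to a Jacobson radical ring: if (A,+,∘) is a brace (additive group abelian) satisfying both a∘(b+c) = a∘b - a + a∘c and (a+b)∘c = a∘c - c + b∘c, then the operation a*b := -a + a∘b - b makes (A,+,*) a (possibly non-unital) associative ring in which every element is quasi-regular (i.e., (A,∘) with a∘b = a + b + a*b is a group). -/
/-- A (left) brace: a skew left brace with abelian additive group. The
multiplicative operation `∘` is written `*`. -/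
class Brace (A : Type*) extends AddCommGroup A, Group A where
  circ_add : ∀ a b c : A, a * (b + c) = a * b + -a + a * c

/-- The ring-type multiplication `a*b = -a + a∘b - b` attached to a brace. -/
def braceMul {A : Type*} [Brace A] (a b : A) : A := -a + a * b + -b

/-- A two-sided brace is a Jacobson radical ring: `a*b := -a + a∘b - b` is an
associative multiplication distributing over `+` on both sides, and
`a∘b = a + b + a*b`, so the group `(A,∘)` witnesses that every element is
quasi-regular. -/
theorem twoSidedBrace_is_radicalRing (A : Type*) [Brace A]
    (hright : ∀ a b c : A, (a + b) * c = a * c + -c + b * c) :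
    (∀ a b c : A, braceMul (braceMul a b) c = braceMul a (braceMul b c)) ∧
      (∀ a b c : A, braceMul a (b + c) = braceMul a b + braceMul a c) ∧
      (∀ a b c : A, braceMul (a + b) c = braceMul a c + braceMul b c) ∧
      (∀ a b : A, a * b = a + b + braceMul a b) := by
  have circ : ∀ a b : A, a * b = a + b + braceMul a b := by
    intro a b; unfold braceMul; abel
  have ld : ∀ a b c : A, braceMul a (b + c) = braceMul a b + braceMul a c := by
    intro a b c; unfold braceMul; rw [Brace.circ_add]; abel
  have rd : ∀ a b c : A, braceMul (a + b) c = braceMul a c + braceMul b c := by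
    intro a b c; unfold braceMul; rw [hright]; abel
  refine ⟨?_, ld, rd, circ⟩
  intro a b c
  have h1 : a * (b * c)
      = a + (b + c + braceMul b c)
        + (braceMul a b + (braceMul a c + braceMul a (braceMul b c))) := by
    rw [circ a (b * c), circ b c, ld, ld]; abel
  have h2 : (a * b) * c
      = (a + b + braceMul a b) + c
        + (braceMul a c + (braceMul b c + braceMul (braceMul a b) c)) := by
    rw [circ (a * b) c, circ a b, rd, rd]; abel
  have h3 := h1.symm.trans ((mul_assoc a b c).symm.trans h2)
  have h4 : (a + b + c + braceMul a b + braceMul a c + braceMul b c)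
        + braceMul a (braceMul b c)
      = (a + b + c + braceMul a b + braceMul a c + braceMul b c)
        + braceMul (braceMul a b) c := by
    abel_nf at h3 ⊢
    exact h3
  exact (add_left_cancel h4).symm
end

section
/- The set A = {gᵏ : k ∈ ℤ} (indexed by ℤ) with operations gᵏ + gˡ = g^{k+(-1)^k l} and gᵏ ∘ gˡ = g^{k+l} is a skew left brace whose multiplicative group is isomorphic to ℤ and whose additive group is isomorphic to the infinite dihedral group. -/
/-!
Write `ε k = (-1)^k`, so that the dihedral sum of `k` and `l` is `k + ε k * l`. It is congruent
to `k + l` mod 2, so `ε` is multiplicative for the dihedral addition; together with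
`ε a ^ 2 = 1` this turns associativity, the inverse laws and the brace identity into ring
identities. Even exponents behave like rotations and odd ones like reflections:
`r i ↦ -2 i`, `sr i ↦ 2 i + 1` is a bijection `DihedralGroup 0 → ℤ` carrying the dihedral
product to the dihedral addition.
-/

/-- The "dihedral" addition `gᵏ + gˡ = g^(k+(-1)^k l)` on the exponents. -/
def dihAdd (k l : ℤ) : ℤ := k + (Int.negOnePow k : ℤ) * l

/-- The additive inverse for `dihAdd`. -/
def dihNeg (k : ℤ) : ℤ := -((Int.negOnePow k : ℤ) * k)

open DihedralGroup

lemma negOnePow_dihAdd (k l : ℤ) : (dihAdd k l).negOnePow = k.negOnePow * l.negOnePow := by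
  rcases Int.even_or_odd k with hk | hk
  · rw [dihAdd, Int.negOnePow_even k hk, Units.val_one, one_mul, Int.negOnePow_add,
      Int.negOnePow_even k hk]
  · rw [dihAdd, Int.negOnePow_odd k hk, Units.val_neg, Units.val_one, neg_one_mul,
      ← sub_eq_add_neg, Int.negOnePow_sub, Int.negOnePow_odd k hk]

lemma negOnePow_dihNeg (k : ℤ) : (dihNeg k).negOnePow = k.negOnePow := by
  rw [dihNeg, Int.negOnePow_neg, Int.negOnePow_eq_iff, ← sub_one_mul]
  rcases Int.isUnit_iff.mp k.negOnePow.isUnit with h | h <;> simp [h]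

lemma coe_negOnePow_mul_self (k : ℤ) : (k.negOnePow : ℤ) * k.negOnePow = 1 := by
  rw [← Units.val_mul, Int.units_mul_self, Units.val_one]

lemma dihAdd_assoc (k l m : ℤ) : dihAdd (dihAdd k l) m = dihAdd k (dihAdd l m) := by
  rw [dihAdd, negOnePow_dihAdd, dihAdd, dihAdd, dihAdd, Units.val_mul]
  ring

lemma dihAdd_zero (k : ℤ) : dihAdd k 0 = k := by
  rw [dihAdd, mul_zero, add_zero]

lemma zero_dihAdd (k : ℤ) : dihAdd 0 k = k := by
  rw [dihAdd, Int.negOnePow_zero, Units.val_one, one_mul, zero_add]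

lemma dihAdd_dihNeg (k : ℤ) : dihAdd k (dihNeg k) = 0 := by
  rw [dihAdd, dihNeg, mul_neg, ← mul_assoc, coe_negOnePow_mul_self, one_mul, add_neg_cancel]

lemma dihNeg_dihAdd (k : ℤ) : dihAdd (dihNeg k) k = 0 := by
  rw [dihAdd, negOnePow_dihNeg, dihNeg, neg_add_cancel]

lemma add_dihAdd (a b c : ℤ) :
    a + dihAdd b c = dihAdd (dihAdd (a + b) (dihNeg a)) (a + c) := by
  conv_rhs => rw [dihAdd, negOnePow_dihAdd, negOnePow_dihNeg, Int.negOnePow_add]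
  simp only [dihAdd, dihNeg, Int.negOnePow_add, Units.val_mul]
  linear_combination (-(c * b.negOnePow)) * coe_negOnePow_mul_self a

def dihedralToInt : DihedralGroup 0 → ℤ
  | r (i : ℤ) => -(2 * i)
  | sr (i : ℤ) => 2 * i + 1

-- `ZMod 0` is definitionally `ℤ`, so the cast must be explicit: otherwise `r i` with `i : ℤ`
-- elaborates without one and the `ZMod` ring lemmas no longer match.
lemma dihedralToInt_r (i : ℤ) : dihedralToInt (r (Int.cast i)) = -(2 * i) := rfl

lemma dihedralToInt_sr (i : ℤ) : dihedralToInt (sr (Int.cast i)) = 2 * i + 1 := rfl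

lemma DihedralGroup.exists_eq_r_or_sr_intCast (x : DihedralGroup 0) :
    (∃ i : ℤ, x = r (Int.cast i)) ∨ ∃ i : ℤ, x = sr (Int.cast i) := by
  rcases x with i | i
  exacts [.inl ⟨i, rfl⟩, .inr ⟨i, rfl⟩]

lemma dihedralToInt_mul (x y : DihedralGroup 0) :
    dihedralToInt (x * y) = dihAdd (dihedralToInt x) (dihedralToInt y) := by
  rcases exists_eq_r_or_sr_intCast x with ⟨i, rfl⟩ | ⟨i, rfl⟩ <;>
  rcases exists_eq_r_or_sr_intCast y with ⟨j, rfl⟩ | ⟨j, rfl⟩ <;>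
  simp only [r_mul_r, r_mul_sr, sr_mul_r, sr_mul_sr, ← Int.cast_add, ← Int.cast_sub,
    dihedralToInt_r, dihedralToInt_sr, dihAdd, Int.negOnePow_neg, Int.negOnePow_two_mul,
    Int.negOnePow_two_mul_add_one, Units.val_one, Units.val_neg] <;>
  ring

lemma dihedralToInt_bijective : Function.Bijective dihedralToInt := by
  refine ⟨fun x y hxy => ?_, fun k => ?_⟩
  · rcases exists_eq_r_or_sr_intCast x with ⟨i, rfl⟩ | ⟨i, rfl⟩ <;>
    rcases exists_eq_r_or_sr_intCast y with ⟨j, rfl⟩ | ⟨j, rfl⟩ <;>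
    simp only [dihedralToInt_r, dihedralToInt_sr] at hxy
    all_goals first | omega | rw [show i = j by omega]
  · rcases Int.even_or_odd' k with ⟨i, rfl | rfl⟩
    · exact ⟨r (Int.cast (-i)), by rw [dihedralToInt_r, mul_neg, neg_neg]⟩
    · exact ⟨sr (Int.cast i), dihedralToInt_sr i⟩

noncomputable def intEquivDihedral : ℤ ≃ DihedralGroup 0 :=
  (Equiv.ofBijective _ dihedralToInt_bijective).symm

lemma intEquivDihedral_dihAdd (k l : ℤ) :
    intEquivDihedral (dihAdd k l) = intEquivDihedral k * intEquivDihedral l := by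
  apply dihedralToInt_bijective.injective
  rw [dihedralToInt_mul]
  simp only [intEquivDihedral, Equiv.ofBijective_apply_symm_apply]

/-- The set `{gᵏ : k ∈ ℤ}` with `gᵏ + gˡ = g^(k+(-1)^k l)` and `gᵏ∘gˡ = g^(k+l)`
is a skew left brace: `dihAdd` is a group operation with identity `0` and
inverse `dihNeg`, the circle operation is the group `ℤ`, the skew brace axiom
`a∘(b+c) = a∘b - a + a∘c` holds, and the additive group is isomorphic to the
infinite dihedral group `DihedralGroup 0`. -/
theorem dihedral_skewBrace_on_Z :
    (∀ k l m : ℤ, dihAdd (dihAdd k l) m = dihAdd k (dihAdd l m)) ∧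
      (∀ k : ℤ, dihAdd k 0 = k ∧ dihAdd 0 k = k) ∧
      (∀ k : ℤ, dihAdd k (dihNeg k) = 0 ∧ dihAdd (dihNeg k) k = 0) ∧
      (∀ a b c : ℤ, a + dihAdd b c = dihAdd (dihAdd (a + b) (dihNeg a)) (a + c)) ∧
      (∃ g : ℤ ≃ Multiplicative ℤ, ∀ k l : ℤ, g (k + l) = g k * g l) ∧
      (∃ f : ℤ → DihedralGroup 0,
        Function.Bijective f ∧ ∀ k l : ℤ, f (dihAdd k l) = f k * f l) :=
  ⟨dihAdd_assoc, fun k => ⟨dihAdd_zero k, zero_dihAdd k⟩,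
    fun k => ⟨dihAdd_dihNeg k, dihNeg_dihAdd k⟩, add_dihAdd,
    ⟨Multiplicative.ofAdd, ofAdd_add⟩,
    ⟨intEquivDihedral, intEquivDihedral.bijective, intEquivDihedral_dihAdd⟩⟩
end
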